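/- Let a be an integer and d, d₁ positive integers with d | d₁ and γ(d₁) = γ(d), where γ(n) = Π_{p | n} p denotes the squarefree kernel of n. Then δ(a,d₁) = (d/d₁)·δ(a,d). -/

import Mathlib

/-!
The two series agree term by term up to the factor `e⁻¹`, where `d₁ = d e`. Since `e` has no
prime factor outside those of `d`, coprimality to `d₁` and to `d` coincide, and for squarefree
`m` (the only `m` with `μ(m) ≠ 0`) also `gcd(m, d₁) = gcd(m, d)`. Hence `lcm(m, d₁) = lcm(m, d) e`,
and `φ(r lcm(m, d) e) = φ(r lcm(m, d)) e` because every prime factor of `e` already divides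
`r lcm(m, d)`.
-/

/-- The double series `δ(a,d)`: the average over primes `p` of the density of elements
of `𝔽_p^*` whose multiplicative order is `≡ a (mod d)`. -/
noncomputable def deltaDensity (a : ℤ) (d : ℕ) : ℝ :=
  ∑' r : ℕ, ∑' m : ℕ,
    if 1 ≤ r ∧ 1 ≤ m ∧ Int.gcd (1 + (r : ℤ) * a) d = 1 ∧ ((Nat.gcd m d : ℤ) ∣ a) then
      (ArithmeticFunction.moebius m : ℝ) /
        ((m : ℝ) * (r : ℝ) * (Nat.totient (r * Nat.lcm m d) : ℝ))
    else 0

/-- The squarefree kernel `γ(n) = Π_{p | n} p`. -/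
def kernel (n : ℕ) : ℕ := ∏ p ∈ n.primeFactors, p

open ArithmeticFunction

namespace Nat

variable {m n d e : ℕ}

theorem primeFactors_mul_of_primeFactors_subset (hn : n ≠ 0) (he : e ≠ 0)
    (h : e.primeFactors ⊆ n.primeFactors) : (n * e).primeFactors = n.primeFactors := by
  rw [primeFactors_mul hn he, Finset.union_eq_left.mpr h]

theorem totient_mul_of_primeFactors_subset (h : e.primeFactors ⊆ n.primeFactors) :
    φ (n * e) = φ n * e := by
  rcases eq_or_ne e 0 with rfl | he
  · simp
  rcases eq_or_ne n 0 with rfl | hn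
  · simp
  rw [totient_eq_div_primeFactors_mul, primeFactors_mul_of_primeFactors_subset hn he h,
    ← Nat.div_mul_right_comm (prod_primeFactors_dvd n), mul_right_comm,
    ← totient_eq_div_primeFactors_mul]

theorem _root_.Squarefree.dvd_of_primeFactors_subset (hm : Squarefree m)
    (h : m.primeFactors ⊆ n.primeFactors) : m ∣ n := by
  rcases eq_or_ne n 0 with rfl | hn
  · exact dvd_zero m
  rw [← prod_primeFactors_of_squarefree hm]
  exact (prod_primeFactors_dvd_iff hn).mpr h

theorem _root_.Squarefree.gcd_mul_right_eq_of_primeFactors_subset (hm : Squarefree m)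
    (hd : d ≠ 0) (he : e ≠ 0) (h : e.primeFactors ⊆ d.primeFactors) :
    m.gcd (d * e) = m.gcd d := by
  refine dvd_antisymm (dvd_gcd (gcd_dvd_left _ _) ?_) (gcd_dvd_gcd_mul_right_right m d e)
  refine (hm.squarefree_of_dvd (gcd_dvd_left _ _)).dvd_of_primeFactors_subset ?_
  rw [← primeFactors_mul_of_primeFactors_subset hd he h]
  exact primeFactors_mono (gcd_dvd_right _ _) (mul_ne_zero hd he)

theorem coprime_mul_right_iff_of_primeFactors_subset (he : e ≠ 0)
    (h : e.primeFactors ⊆ d.primeFactors) : Coprime n (d * e) ↔ Coprime n d := by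
  rw [coprime_mul_iff_right, and_iff_left_iff_imp]
  refine fun hnd => coprime_of_dvd fun p hp hpn hpe => hp.ne_one (eq_one_of_dvd_coprimes hnd hpn ?_)
  exact dvd_of_mem_primeFactors (h (mem_primeFactors.mpr ⟨hp, hpe, he⟩))

theorem lcm_mul_right_of_gcd_eq (h : m.gcd (d * e) = m.gcd d) : m.lcm (d * e) = m.lcm d * e := by
  rw [Nat.lcm, Nat.lcm, h, ← mul_assoc, Nat.div_mul_right_comm ((gcd_dvd_left m d).mul_right d)]

end Nat

theorem primeFactors_kernel (n : ℕ) : (kernel n).primeFactors = n.primeFactors :=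
  Nat.primeFactors_prod_primeFactors n

noncomputable def deltaTerm (a : ℤ) (d r m : ℕ) : ℝ :=
  if 1 ≤ r ∧ 1 ≤ m ∧ Int.gcd (1 + (r : ℤ) * a) d = 1 ∧ ((Nat.gcd m d : ℤ) ∣ a) then
    (moebius m : ℝ) / ((m : ℝ) * (r : ℝ) * (Nat.totient (r * Nat.lcm m d) : ℝ))
  else 0

theorem deltaDensity_eq_tsum_deltaTerm (a : ℤ) (d : ℕ) :
    deltaDensity a d = ∑' r : ℕ, ∑' m : ℕ, deltaTerm a d r m :=
  rfl

theorem deltaTerm_mul_of_primeFactors_subset (a : ℤ) {d e : ℕ} (r m : ℕ) (hd : d ≠ 0)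
    (he : e ≠ 0) (h : e.primeFactors ⊆ d.primeFactors) :
    deltaTerm a (d * e) r m = (e : ℝ)⁻¹ * deltaTerm a d r m := by
  by_cases hm : Squarefree m
  swap
  · simp [deltaTerm, moebius_eq_zero_of_not_squarefree hm]
  have hgcd := hm.gcd_mul_right_eq_of_primeFactors_subset hd he h
  have hcop : Int.gcd (1 + (r : ℤ) * a) ↑(d * e) = 1 ↔ Int.gcd (1 + (r : ℤ) * a) d = 1 :=
    Nat.coprime_mul_right_iff_of_primeFactors_subset he h
  simp only [deltaTerm, hgcd, hcop]
  split_ifs with hcond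
  swap
  · rw [mul_zero]
  have hrL : r * m.lcm d ≠ 0 := mul_ne_zero (by omega) (Nat.lcm_ne_zero (by omega) hd)
  have he_sub : e.primeFactors ⊆ (r * m.lcm d).primeFactors :=
    h.trans (Nat.primeFactors_mono ((Nat.dvd_lcm_right m d).mul_left r) hrL)
  rw [Nat.lcm_mul_right_of_gcd_eq hgcd, ← mul_assoc,
    Nat.totient_mul_of_primeFactors_subset he_sub]
  push_cast
  ring

theorem deltaDensity_of_dvd_of_kernel_eq_general (a : ℤ) (d d₁ : ℕ) (hd₁ : 0 < d₁)
    (hdvd : d ∣ d₁) (hker : kernel d₁ = kernel d) :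
    deltaDensity a d₁ = ((d : ℝ) / (d₁ : ℝ)) * deltaDensity a d := by
  obtain ⟨e, rfl⟩ := hdvd
  obtain ⟨hd, he⟩ := mul_ne_zero_iff.mp hd₁.ne'
  have h : e.primeFactors ⊆ d.primeFactors := by
    rw [← primeFactors_kernel d, ← hker, primeFactors_kernel]
    exact Nat.primeFactors_mono (dvd_mul_left e d) hd₁.ne'
  have hratio : (d : ℝ) / ((d * e : ℕ) : ℝ) = (e : ℝ)⁻¹ := by
    rw [Nat.cast_mul, div_mul_eq_div_div, div_self (Nat.cast_ne_zero.mpr hd), one_div]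
  simp only [deltaDensity_eq_tsum_deltaTerm, deltaTerm_mul_of_primeFactors_subset a _ _ hd he h,
    tsum_mul_left, hratio]

/-- If `d | d₁` and `γ(d₁) = γ(d)`, then `δ(a,d₁) = (d/d₁)·δ(a,d)`. -/
theorem deltaDensity_of_dvd_of_kernel_eq (a : ℤ) (d d₁ : ℕ) (hd : 0 < d) (hd₁ : 0 < d₁)
    (hdvd : d ∣ d₁) (hker : kernel d₁ = kernel d) :
    deltaDensity a d₁ = ((d : ℝ) / (d₁ : ℝ)) * deltaDensity a d :=
  deltaDensity_of_dvd_of_kernel_eq_general a d d₁ hd₁ hdvd hker
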